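/- arXiv:1108.0894 — 5 statements merged into one kernel-verified Lean document; each statement's English description precedes it below -/
import Mathlib

section
/- In a tree, the family of vertex sets of paths satisfies the Helly property: if a finite family of paths in a tree pairwise intersect (share at least one vertex), then there is a vertex common to all of them. -/
/-!
Fix a root `r`. In a tree every walk `p` has a gate: the vertex `c` of `p` closest to `r` lies on
the path from `r` to any vertex of `p`. Take the family member `P k` whose gate `c k` is farthest
from `r`. For any other `P j`, the path from `r` to a common vertex `w` of `P k` and `P j` is a
geodesic through both gates, and `c j` comes no later than `c k` on it, so `c k` lies on the part
from `c j` to `w`, which stays inside `P j` because paths in a tree are unique.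
-/

namespace SimpleGraph

variable {V : Type*} {G : SimpleGraph V} {u v x y : V}

namespace Walk

lemma dist_add_dist_le_length (p : G.Walk u v) (hx : x ∈ p.support) :
    G.dist u x + G.dist x v ≤ p.length := by
  classical
  have hlen := congrArg Walk.length (p.take_spec hx)
  rw [length_append] at hlen
  have := dist_le (p.takeUntil x hx)
  have := dist_le (p.dropUntil x hx)
  omega

lemma eq_of_dist_le_of_mem_support {p : G.Walk u v} (hp : p.length = G.dist u v)
    (hx : x ∈ p.support) (h : G.dist u v ≤ G.dist u x) : x = v := by
  classical
  have := p.dist_add_dist_le_length hx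
  exact (p.dropUntil x hx).reachable.dist_eq_zero_iff.mp (by omega)

lemma mem_support_dropUntil_of_dist_le [DecidableEq V] {p : G.Walk u v}
    (hp : p.length = G.dist u v) (hx : x ∈ p.support) (hy : y ∈ p.support)
    (h : G.dist u y ≤ G.dist u x) : x ∈ (p.dropUntil y hy).support := by
  have hx' : x ∈ ((p.takeUntil y hy).append (p.dropUntil y hy)).support := by
    rwa [p.take_spec hy]
  rcases (mem_support_append_iff _ _).mp hx' with hxt | hxd
  · obtain rfl := eq_of_dist_le_of_mem_support
      (length_eq_dist_of_subwalk hp (p.isSubwalk_takeUntil hy)) hxt h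
    exact start_mem_support _
  · exact hxd

lemma exists_isPath_support_subset (p : G.Walk u v) (hx : x ∈ p.support)
    (hy : y ∈ p.support) : ∃ q : G.Walk x y, q.IsPath ∧ q.support ⊆ p.support := by
  classical
  refine ⟨((p.takeUntil x hx).reverse.append (p.takeUntil y hy)).bypass, bypass_isPath _,
    fun z hz ↦ ?_⟩
  replace hz := support_bypass_subset_support _ hz
  rw [mem_support_append_iff, support_reverse, List.mem_reverse] at hz
  exact hz.elim (p.support_takeUntil_subset_support hx ·)
    (p.support_takeUntil_subset_support hy ·)

lemma IsPath.append {w : V} {p : G.Walk u v} {q : G.Walk v w} (hp : p.IsPath) (hq : q.IsPath)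
    (h : ∀ z ∈ p.support, z ∈ q.support → z = v) : (p.append q).IsPath := by
  have hqn : (v :: q.support.tail).Nodup := q.cons_tail_support ▸ hq.support_nodup
  rw [isPath_def, support_append]
  refine hp.support_nodup.append hqn.of_cons fun z hzp hzq ↦ ?_
  obtain rfl := h z hzp (List.mem_of_mem_tail hzq)
  exact (List.nodup_cons.mp hqn).1 hzq

end Walk

namespace IsAcyclic

lemma support_subset_of_mem_support (hG : G.IsAcyclic) {a b : V} (p : G.Walk a b)
    (hx : x ∈ p.support) (hy : y ∈ p.support) {q : G.Walk x y} (hq : q.IsPath) :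
    q.support ⊆ p.support := by
  obtain ⟨s, hs, hsp⟩ := p.exists_isPath_support_subset hx hy
  obtain rfl : q = s :=
    congrArg Subtype.val ((hG.subsingleton_path x y).elim ⟨q, hq⟩ ⟨s, hs⟩)
  exact hsp

/-- `c` is the vertex of `p` nearest to `r`: a vertex shared by a geodesic from `r` to `c` and a
path from `c` into `p` is at least as far from `r` as `c`, hence equals `c`. -/
lemma exists_gate (hG : G.IsAcyclic) {a b r : V} (p : G.Walk a b) (hr : G.Reachable r a) :
    ∃ c ∈ p.support, ∀ w ∈ p.support, ∀ q : G.Walk r w, q.IsPath → c ∈ q.support := by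
  classical
  obtain ⟨c, hcp, hc⟩ := p.support.toFinset.exists_min_image (G.dist r) ⟨a, by simp⟩
  simp only [List.mem_toFinset] at hcp hc
  refine ⟨c, hcp, fun w hw q hq ↦ ?_⟩
  obtain ⟨t, ht, htlen⟩ := (hr.trans (p.takeUntil c hcp).reachable).exists_path_of_dist
  obtain ⟨s, hs, hsp⟩ := p.exists_isPath_support_subset hcp hw
  have hts : (t.append s).IsPath := ht.append hs fun z hzt hzs ↦
    t.eq_of_dist_le_of_mem_support htlen hzt (hc z (hsp hzs))
  obtain rfl : q = t.append s :=
    congrArg Subtype.val ((hG.subsingleton_path r w).elim ⟨q, hq⟩ ⟨_, hts⟩)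
  exact (Walk.mem_support_append_iff _ _).mpr (Or.inl t.end_mem_support)

end IsAcyclic

end SimpleGraph

theorem stmt_4_general {V : Type} (G : SimpleGraph V)
    (hconn : G.Connected) (hacyc : G.IsAcyclic)
    {ι : Type} [Fintype ι] [Nonempty ι]
    (a b : ι → V) (P : ∀ i, G.Path (a i) (b i))
    (hpair : ∀ i j, ∃ v, v ∈ (P i).1.support ∧ v ∈ (P j).1.support) :
    ∃ v, ∀ i, v ∈ (P i).1.support := by
  classical
  obtain ⟨r⟩ := hconn.nonempty
  choose c hcP hc using fun i ↦ hacyc.exists_gate (P i).1 (hconn r (a i))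
  obtain ⟨k, -, hk⟩ :=
    Finset.univ.exists_max_image (fun i ↦ G.dist r (c i)) Finset.univ_nonempty
  refine ⟨c k, fun j ↦ ?_⟩
  obtain ⟨w, hwk, hwj⟩ := hpair k j
  obtain ⟨q, hq, hqlen⟩ := (hconn r w).exists_path_of_dist
  have hcj := hc j w hwj q hq
  exact hacyc.support_subset_of_mem_support (P j).1 (hcP j) hwj (hq.dropUntil hcj)
    (q.mem_support_dropUntil_of_dist_le hqlen (hc k w hwk q hq) hcj (hk j (Finset.mem_univ j)))

/-- Helly property for paths in a tree: if finitely many paths in a tree pairwise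
share a vertex, then all of them share a common vertex. -/
theorem stmt_4 {V : Type} [Fintype V] (G : SimpleGraph V)
    (hconn : G.Connected) (hacyc : G.IsAcyclic)
    {ι : Type} [Fintype ι] [Nonempty ι]
    (a b : ι → V) (P : ∀ i, G.Path (a i) (b i))
    (hpair : ∀ i j, ∃ v, v ∈ (P i).1.support ∧ v ∈ (P j).1.support) :
    ∃ v, ∀ i, v ∈ (P i).1.support :=
  stmt_4_general G hconn hacyc a b P hpair
end

section
/- Let C be an optimal solution to the submodular-cost set cover formulation of the min-error Bridges problem (a set of kill moves and open-bridge moves covering every claw). Then the bridge solution that opens exactly the bridges of the chosen open-bridge moves has total error FP + FN at most cost(C): the weight of bads succeeding is at most the open-bridge-move cost, and every failed good's weight is accounted for by a kill move. -/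
open scoped Classical

section Bridges

variable {G B : Type} [DecidableEq B] {C : Finset (G ⊕ B)} {O : Finset B}

theorem inter_nonempty_iff_exists_inr_mem (hO : ∀ s, s ∈ O ↔ Sum.inr s ∈ C) (σ : Finset B) :
    (σ ∩ O).Nonempty ↔ ∃ s ∈ σ, Sum.inr s ∈ C := by
  simp only [Finset.Nonempty, Finset.mem_inter, hO]

theorem inl_mem_of_inter_eq_empty (hO : ∀ s, s ∈ O ↔ Sum.inr s ∈ C) {g : G} {σ : Finset B}
    (hcover : Sum.inl g ∈ C ∨ ∃ s ∈ σ, Sum.inr s ∈ C) (hfail : σ ∩ O = ∅) :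
    Sum.inl g ∈ C := by
  refine hcover.resolve_right fun hopen => ?_
  rw [← inter_nonempty_iff_exists_inr_mem hO, hfail] at hopen
  exact Finset.not_nonempty_empty hopen

end Bridges

theorem stmt_10_general {G D B : Type} [Fintype G] [Fintype D] [DecidableEq G] [DecidableEq B]
    (σg : G → Finset B) (σb : D → Finset B)
    (wG : G → ℝ) (wD : D → ℝ) (hwG : ∀ g, 0 ≤ wG g)
    (C : Finset (G ⊕ B))
    (hcover : ∀ g : G, Sum.inl g ∈ C ∨ ∃ s ∈ σg g, Sum.inr s ∈ C)
    (O : Finset B) (hO : ∀ s, s ∈ O ↔ Sum.inr s ∈ C) :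
    (∑ g ∈ Finset.univ.filter (fun g : G => σg g ∩ O = ∅), wG g) +
      (∑ b ∈ Finset.univ.filter (fun b : D => (σb b ∩ O).Nonempty), wD b) ≤
    (∑ g ∈ Finset.univ.filter (fun g : G => Sum.inl g ∈ C), wG g) +
      (∑ b ∈ Finset.univ.filter (fun b : D => ∃ s ∈ σb b, Sum.inr s ∈ C), wD b) := by
  have failed_subset_killed : Finset.univ.filter (fun g : G => σg g ∩ O = ∅) ⊆
      Finset.univ.filter (fun g : G => Sum.inl g ∈ C) :=
    Finset.monotone_filter_right _ fun g _ hfail => inl_mem_of_inter_eq_empty hO (hcover g) hfail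
  have succeeding_eq_charged : Finset.univ.filter (fun b : D => (σb b ∩ O).Nonempty) =
      Finset.univ.filter (fun b : D => ∃ s ∈ σb b, Sum.inr s ∈ C) :=
    Finset.filter_congr fun b _ => inter_nonempty_iff_exists_inr_mem hO (σb b)
  rw [succeeding_eq_charged]
  exact add_le_add_left
    (Finset.sum_le_sum_of_subset_of_nonneg failed_subset_killed fun g _ _ => hwG g) _

/-- If `C` (a set of kill moves and open-bridge moves) covers every claw, then the bridge
solution opening exactly the bridges of `C` has total error FP + FN at most cost(C). -/
theorem stmt_10 {G D B : Type} [Fintype G] [Fintype D] [DecidableEq G] [DecidableEq B]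
    (σg : G → Finset B) (σb : D → Finset B)
    (wG : G → ℝ) (wD : D → ℝ) (hwG : ∀ g, 0 ≤ wG g) (hwD : ∀ b, 0 ≤ wD b)
    (C : Finset (G ⊕ B))
    (hcover : ∀ g : G, Sum.inl g ∈ C ∨ ∃ s ∈ σg g, Sum.inr s ∈ C)
    (O : Finset B) (hO : ∀ s, s ∈ O ↔ Sum.inr s ∈ C) :
    (∑ g ∈ Finset.univ.filter (fun g : G => σg g ∩ O = ∅), wG g) +
      (∑ b ∈ Finset.univ.filter (fun b : D => (σb b ∩ O).Nonempty), wD b) ≤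
    (∑ g ∈ Finset.univ.filter (fun g : G => Sum.inl g ∈ C), wG g) +
      (∑ b ∈ Finset.univ.filter (fun b : D => ∃ s ∈ σb b, Sum.inr s ∈ C), wD b) :=
  stmt_10_general σg σb wG wD hwG C hcover O hO
end

section
/- With the same construction, if S ⊆ V with |S| = B is NOT a vertex cover of G, then the capture probability is strictly less than (B + (n − B)/2)/n. Consequently, G has a vertex cover of size at most B iff some size-B sensor set achieves capture probability at least (n + B)/(2n). -/
/-!
Off `S` the capture probability is half the average of its neighbours' values, hence at most
`1/2`, with equality exactly when every neighbour lies in `S`. So the total capture probability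
is at most `|S| + (n - |S|)/2`, attained by a vertex cover, while an edge with both ends outside
`S` makes one of the summands strictly smaller than `1/2`.
-/

open Finset

namespace SimpleGraph

variable {V : Type} [Fintype V] {G : SimpleGraph V} [DecidableRel G.Adj]

lemma sum_neighborFinset_div_le_half {f : V → ℝ} {v : V}
    (hf : ∀ u ∈ G.neighborFinset v, f u ≤ 1) :
    (∑ u ∈ G.neighborFinset v, f u) / (2 * G.degree v) ≤ 1 / 2 := by
  have hsum : ∑ u ∈ G.neighborFinset v, f u ≤ G.degree v := by
    simpa using sum_le_card_nsmul _ _ _ hf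
  rcases (G.degree v).eq_zero_or_pos with hd | hd
  · simp [hd]
  · rw [div_le_iff₀ (by positivity)]
    linarith

lemma sum_neighborFinset_div_lt_half {f : V → ℝ} {v : V}
    (hf : ∀ u ∈ G.neighborFinset v, f u ≤ 1) (hlt : ∃ u ∈ G.neighborFinset v, f u < 1) :
    (∑ u ∈ G.neighborFinset v, f u) / (2 * G.degree v) < 1 / 2 := by
  have hsum : ∑ u ∈ G.neighborFinset v, f u < ∑ u ∈ G.neighborFinset v, 1 :=
    sum_lt_sum hf hlt
  have hd : 0 < G.degree v := by
    obtain ⟨u, hu, -⟩ := hlt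
    exact G.card_neighborFinset_eq_degree v ▸ card_pos.mpr ⟨u, hu⟩
  rw [sum_const, card_neighborFinset_eq_degree, nsmul_one] at hsum
  rw [div_lt_iff₀ (by positivity)]
  linarith

lemma sum_neighborFinset_div_eq_half {f : V → ℝ} {v : V}
    (hf : ∀ u ∈ G.neighborFinset v, f u = 1) (hd : 0 < G.degree v) :
    (∑ u ∈ G.neighborFinset v, f u) / (2 * G.degree v) = 1 / 2 := by
  rw [sum_congr rfl hf, sum_const, card_neighborFinset_eq_degree, nsmul_one]
  field_simp

/-- `q` is the capture probability of the sensor set `S` for the walk on `G` that at each step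
moves to the absorbing sink with probability `1/2` and otherwise to a uniform neighbour. -/
structure IsCaptureProbability (G : SimpleGraph V) [DecidableRel G.Adj] (S : Finset V)
    (q : V → ℝ) : Prop where
  le_one : ∀ v, q v ≤ 1
  eq_one_of_mem : ∀ v ∈ S, q v = 1
  eq_of_notMem : ∀ v ∉ S, q v = (∑ u ∈ G.neighborFinset v, q u) / (2 * G.degree v)

namespace IsCaptureProbability

variable {S : Finset V} {q : V → ℝ}

lemma le_half (hq : G.IsCaptureProbability S q) {v : V} (hv : v ∉ S) : q v ≤ 1 / 2 := by
  rw [hq.eq_of_notMem v hv]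
  exact sum_neighborFinset_div_le_half fun u _ => hq.le_one u

lemma lt_half_of_adj (hq : G.IsCaptureProbability S q) {u v : V} (huv : G.Adj u v)
    (hu : u ∉ S) (hv : v ∉ S) : q u < 1 / 2 := by
  rw [hq.eq_of_notMem u hu]
  refine sum_neighborFinset_div_lt_half (fun w _ => hq.le_one w) ⟨v, ?_, ?_⟩
  · simpa using huv
  · linarith [hq.le_half hv]

lemma eq_half_of_isVertexCover (hq : G.IsCaptureProbability S q) (hS : G.IsVertexCover S)
    {v : V} (hd : 0 < G.degree v) (hv : v ∉ S) : q v = 1 / 2 := by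
  rw [hq.eq_of_notMem v hv]
  refine sum_neighborFinset_div_eq_half (fun u hu => hq.eq_one_of_mem u ?_) hd
  exact (hS ((G.mem_neighborFinset v u).mp hu)).resolve_left hv

variable [DecidableEq V]

lemma sum_eq_card_add_sum_compl (hq : G.IsCaptureProbability S q) :
    ∑ v, q v = #S + ∑ v ∈ Sᶜ, q v := by
  rw [← sum_add_sum_compl S q, sum_congr rfl hq.eq_one_of_mem, sum_const, nsmul_one]

lemma sum_lt_of_adj (hq : G.IsCaptureProbability S q) {u v : V} (huv : G.Adj u v)
    (hu : u ∉ S) (hv : v ∉ S) : ∑ w, q w < (Fintype.card V + #S) / 2 := by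
  have hlt : ∑ w ∈ Sᶜ, q w < ∑ w ∈ Sᶜ, (1 / 2 : ℝ) :=
    sum_lt_sum (fun w hw => hq.le_half (mem_compl.mp hw))
      ⟨u, mem_compl.mpr hu, hq.lt_half_of_adj huv hu hv⟩
  have hcard : (#S + #Sᶜ : ℝ) = Fintype.card V := by exact_mod_cast card_add_card_compl S
  rw [sum_const, nsmul_eq_mul] at hlt
  rw [hq.sum_eq_card_add_sum_compl, ← hcard]
  linarith

lemma sum_eq_of_isVertexCover (hq : G.IsCaptureProbability S q) (hS : G.IsVertexCover S)
    (hdeg : ∀ v, 0 < G.degree v) : ∑ v, q v = (Fintype.card V + #S) / 2 := by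
  have hcard : (#S + #Sᶜ : ℝ) = Fintype.card V := by exact_mod_cast card_add_card_compl S
  rw [hq.sum_eq_card_add_sum_compl, ← hcard,
    sum_congr rfl fun v hv => hq.eq_half_of_isVertexCover hS (hdeg v) (mem_compl.mp hv),
    sum_const, nsmul_eq_mul]
  ring

end IsCaptureProbability

end SimpleGraph

open SimpleGraph

theorem stmt_12_general {V : Type} [Fintype V] [DecidableEq V] (G : SimpleGraph V)
    [DecidableRel G.Adj] (n : ℕ) (hn : n = Fintype.card V)
    (hdeg : ∀ v, 0 < G.degree v) (B : ℕ) (hB : B ≤ n)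
    (Q : Finset V → V → ℝ)
    (hQ1 : ∀ S v, Q S v ≤ 1)
    (hQS : ∀ S, ∀ v ∈ S, Q S v = 1)
    (hQN : ∀ S, ∀ v ∉ S, Q S v = (∑ u ∈ G.neighborFinset v, Q S u) / (2 * G.degree v)) :
    (∀ S : Finset V, S.card = B → (∃ u v, G.Adj u v ∧ u ∉ S ∧ v ∉ S) →
      (∑ v, Q S v) / n < ((n : ℝ) + B) / (2 * n)) ∧
    ((∃ C : Finset V, C.card ≤ B ∧ ∀ u v, G.Adj u v → u ∈ C ∨ v ∈ C) ↔
      (∃ S : Finset V, S.card = B ∧ ((n : ℝ) + B) / (2 * n) ≤ (∑ v, Q S v) / n)) := by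
  have hQ (S : Finset V) : G.IsCaptureProbability S (Q S) := ⟨hQ1 S, hQS S, hQN S⟩
  have hlt (S : Finset V) (hSB : S.card = B) (hS : ∃ u v, G.Adj u v ∧ u ∉ S ∧ v ∉ S) :
      (∑ v, Q S v) / n < ((n : ℝ) + B) / (2 * n) := by
    obtain ⟨u, v, huv, hu, hv⟩ := hS
    have hn0 : (0 : ℝ) < n := by
      rw [hn]
      exact_mod_cast Fintype.card_pos_iff.mpr ⟨u⟩
    rw [← div_div, div_lt_div_iff_of_pos_right hn0, hn, ← hSB]
    exact (hQ S).sum_lt_of_adj huv hu hv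
  refine ⟨hlt, ⟨fun ⟨C, hCB, hC⟩ => ?_, fun ⟨S, hSB, hS⟩ => ⟨S, hSB.le, ?_⟩⟩⟩
  · obtain ⟨S, hCS, -, hSB⟩ :=
      exists_subsuperset_card_eq (subset_univ C) hCB (by rwa [card_univ, ← hn])
    have hScover : G.IsVertexCover S := IsVertexCover.subset (coe_subset.mpr hCS) fun u v => hC u v
    refine ⟨S, hSB, le_of_eq ?_⟩
    rw [(hQ S).sum_eq_of_isVertexCover hScover hdeg, hSB, hn, div_div]
  · by_contra! hS'
    exact (hlt S hSB hS').not_ge hS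

/-- Vertex-cover reduction, hard direction: with capture probabilities `Q S` for each
sensor set `S` (harmonic off `S`, equal to 1 on `S`), any size-`B` set `S` that is not a
vertex cover achieves capture probability strictly below `(n + B)/(2n)`. Consequently,
`G` has a vertex cover of size at most `B` iff some size-`B` sensor set achieves capture
probability at least `(n + B)/(2n)`. -/
theorem stmt_12 {V : Type} [Fintype V] [DecidableEq V] (G : SimpleGraph V)
    [DecidableRel G.Adj] (n : ℕ) (hn : n = Fintype.card V) (hn0 : 0 < n)
    (hdeg : ∀ v, 0 < G.degree v) (B : ℕ) (hB : B ≤ n)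
    (Q : Finset V → V → ℝ)
    (hQ0 : ∀ S v, 0 ≤ Q S v) (hQ1 : ∀ S v, Q S v ≤ 1)
    (hQS : ∀ S, ∀ v ∈ S, Q S v = 1)
    (hQN : ∀ S, ∀ v ∉ S, Q S v = (∑ u ∈ G.neighborFinset v, Q S u) / (2 * G.degree v)) :
    (∀ S : Finset V, S.card = B → (∃ u v, G.Adj u v ∧ u ∉ S ∧ v ∉ S) →
      (∑ v, Q S v) / n < ((n : ℝ) + B) / (2 * n)) ∧
    ((∃ C : Finset V, C.card ≤ B ∧ ∀ u v, G.Adj u v → u ∈ C ∨ v ∈ C) ↔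
      (∃ S : Finset V, S.card = B ∧ ((n : ℝ) + B) / (2 * n) ≤ (∑ v, Q S v) / n)) :=
  stmt_12_general G n hn hdeg B hB Q hQ1 hQS hQN
end

section
/- In the reduction from Maximum Independent Set to the net-flow Bridges problem (each vertex v becomes a bridge with max(deg(v) − 1, 0) bads crossing only it and, if deg(v)=0, one good; each edge (u,v) becomes a good who can cross bridges u and v; all weights 1), if S is an independent set in G then opening exactly the bridges corresponding to S yields net flow TN − FN equal to |S|. -/
open scoped Classical

/-!
The edges meeting an independent set `S` are partitioned by their (unique) endpoint in `S`,
so there are `∑ v ∈ S, deg v` of them. Each vertex of `S` then contributes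
`deg v + [deg v = 0] - [deg v > 0] (deg v - 1) = 1` to the net flow.
-/

namespace SimpleGraph

variable {V : Type*} [DecidableEq V] (G : SimpleGraph V) [Fintype G.edgeSet]
  [∀ v, Fintype (G.neighborSet v)]

theorem card_filter_edgeFinset_exists_mem_eq_sum_degree {S : Finset V}
    (hS : G.IsIndepSet S) :
    (G.edgeFinset.filter (fun e => ∃ v ∈ S, v ∈ e)).card = ∑ v ∈ S, G.degree v := by
  have hunion : G.edgeFinset.filter (fun e => ∃ v ∈ S, v ∈ e)
      = S.biUnion fun v => G.incidenceFinset v := by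
    ext e
    simp only [Finset.mem_filter, Finset.mem_biUnion, incidenceFinset_eq_filter]
    exact ⟨fun ⟨he, v, hv, hve⟩ => ⟨v, hv, he, hve⟩, fun ⟨v, hv, he, hve⟩ => ⟨he, v, hv, hve⟩⟩
  have hdisj : (S : Set V).PairwiseDisjoint fun v => G.incidenceFinset v := by
    intro u hu v hv huv
    refine Finset.disjoint_left.mpr fun e heu hev => hS hu hv huv ?_
    rw [mem_incidenceFinset] at heu hev
    exact G.adj_of_mem_incidenceSet huv heu hev
  rw [hunion, Finset.card_biUnion hdisj]
  exact Finset.sum_congr rfl fun v _ => G.card_incidenceFinset_eq_degree v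

end SimpleGraph

theorem Finset.sum_add_card_filter_eq_zero_sub_sum_filter_pos_eq_card {α : Type*}
    (s : Finset α) (f : α → ℕ) :
    (∑ a ∈ s, (f a : ℤ)) + (s.filter (fun a => f a = 0)).card
      - ∑ a ∈ s.filter (fun a => 0 < f a), ((f a : ℤ) - 1) = s.card := by
  rw [Finset.card_filter, Finset.sum_filter, Finset.card_eq_sum_ones]
  push_cast
  rw [← Finset.sum_add_distrib, ← Finset.sum_sub_distrib]
  refine Finset.sum_congr rfl fun a _ => ?_
  split_ifs <;> omega

/-- MIS-to-Bridges reduction: each vertex `v` becomes a bridge with `deg v − 1` unit bads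
(only crossing it), isolated vertices get one unit good, and each edge becomes a unit
good crossing its two bridges. Opening exactly the bridges of an independent set `S`
yields net flow `TN − FN = |S|`. -/
theorem stmt_17 {V : Type} [Fintype V] [DecidableEq V] (G : SimpleGraph V)
    [DecidableRel G.Adj] (S : Finset V)
    (hind : ∀ u ∈ S, ∀ v ∈ S, ¬ G.Adj u v) :
    (((G.edgeFinset.filter (fun e => ∃ v ∈ S, v ∈ e)).card : ℤ) +
        ((S.filter (fun v => G.degree v = 0)).card : ℤ)) -
      (∑ v ∈ S.filter (fun v => 0 < G.degree v), ((G.degree v : ℤ) - 1)) =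
    (S.card : ℤ) := by
  rw [G.card_filter_edgeFinset_exists_mem_eq_sum_degree fun u hu v hv _ => hind u hu v hv]
  push_cast
  exact S.sum_add_card_filter_eq_zero_sub_sum_filter_pos_eq_card fun v => G.degree v
end

section
/- In the same MIS-to-Bridges reduction, any single open bridge contributes net flow at most 1: for bridge v with deg(v) ≥ 1, at most deg(v) goods can use it while exactly deg(v) − 1 bads do, and two open bridges each achieve contribution exactly 1 only if the corresponding vertices are non-adjacent (since a good corresponding to a shared edge can be counted for only one of them). Hence an integral net-flow solution of value k yields an independent set of size k in G. -/
open scoped Classical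

/-!
Writing `E(O)` for the edges with an endpoint in `O`, the net flow equals
`#E(O) + #O - ∑_{v ∈ O} deg v`, because an open bridge of positive degree pays `deg v - 1`
and an isolated one gains `1`. Since `#E(O) ≤ ∑_{v ∈ O} deg v`, the net flow is at most `#O`.
If two open vertices `u, w` are adjacent, closing `u` loses at most `deg u - 1` goods (the edge
`uw` still touches `w`) and saves `deg u - 1` bads, so it does not decrease the net flow.
Closing such vertices until none are adjacent yields an independent set `S` with
`k ≤ netflow O ≤ netflow S ≤ #S`.
-/

namespace SimpleGraph

variable {V : Type*} [Fintype V] [DecidableEq V] (G : SimpleGraph V) [DecidableRel G.Adj]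

def edgesTouching (O : Finset V) : Finset (Sym2 V) :=
  G.edgeFinset.filter (fun e => ∃ v ∈ O, v ∈ e)

def bridgeNetFlow (O : Finset V) : ℤ :=
  (((G.edgesTouching O).card : ℤ) + ((O.filter (fun v => G.degree v = 0)).card : ℤ)) -
    ∑ v ∈ O.filter (fun v => 0 < G.degree v), ((G.degree v : ℤ) - 1)

lemma bridgeNetFlow_eq (O : Finset V) :
    G.bridgeNetFlow O = (G.edgesTouching O).card + O.card - ∑ v ∈ O, (G.degree v : ℤ) := by
  have hpos : O.filter (fun v => 0 < G.degree v) = O.filter (fun v => ¬ G.degree v = 0) :=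
    Finset.filter_congr fun v _ => Nat.pos_iff_ne_zero
  have hcard := Finset.card_filter_add_card_filter_not (s := O) (fun v => G.degree v = 0)
  have hsum : ∑ v ∈ O.filter (fun v => 0 < G.degree v), (G.degree v : ℤ) =
      ∑ v ∈ O, (G.degree v : ℤ) :=
    Finset.sum_filter_of_ne fun v _ h => Nat.pos_of_ne_zero (by exact_mod_cast h)
  rw [bridgeNetFlow, Finset.sum_sub_distrib, hsum, Finset.sum_const, hpos]
  push_cast [← hcard]
  ring

lemma edgesTouching_subset_biUnion (O : Finset V) :
    G.edgesTouching O ⊆ O.biUnion (fun v => G.incidenceFinset v) := by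
  intro e he
  obtain ⟨heE, v, hvO, hve⟩ := Finset.mem_filter.1 he
  exact Finset.mem_biUnion.2
    ⟨v, hvO, (G.mem_incidenceFinset v e).2 ⟨mem_edgeFinset.1 heE, hve⟩⟩

lemma card_edgesTouching_le_sum_degree (O : Finset V) :
    (G.edgesTouching O).card ≤ ∑ v ∈ O, G.degree v :=
  calc (G.edgesTouching O).card ≤ (O.biUnion (fun v => G.incidenceFinset v)).card :=
        Finset.card_le_card (G.edgesTouching_subset_biUnion O)
    _ ≤ ∑ v ∈ O, (G.incidenceFinset v).card := Finset.card_biUnion_le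
    _ = ∑ v ∈ O, G.degree v := by simp only [card_incidenceFinset_eq_degree]

lemma bridgeNetFlow_le_card (O : Finset V) : G.bridgeNetFlow O ≤ O.card := by
  have hedges : ((G.edgesTouching O).card : ℤ) ≤ ∑ v ∈ O, (G.degree v : ℤ) := by
    exact_mod_cast G.card_edgesTouching_le_sum_degree O
  rw [bridgeNetFlow_eq]
  linarith

lemma edgesTouching_subset_erase_union (O : Finset V) (u : V) :
    G.edgesTouching O ⊆ G.edgesTouching (O.erase u) ∪ G.incidenceFinset u := by
  intro e he
  obtain ⟨heE, v, hvO, hve⟩ := Finset.mem_filter.1 he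
  rcases eq_or_ne v u with rfl | hvu
  · exact Finset.mem_union_right _ ((G.mem_incidenceFinset v e).2 ⟨mem_edgeFinset.1 heE, hve⟩)
  · exact Finset.mem_union_left _
      (Finset.mem_filter.2 ⟨heE, v, Finset.mem_erase.2 ⟨hvu, hvO⟩, hve⟩)

/-- The edge `uw` is counted both in `E(O \ {u})` (through `w`) and among the edges at `u`. -/
lemma card_edgesTouching_add_one_le {O : Finset V} {u w : V} (hw : w ∈ O) (hadj : G.Adj u w) :
    (G.edgesTouching O).card + 1 ≤ (G.edgesTouching (O.erase u)).card + G.degree u := by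
  have hshared : s(u, w) ∈ G.edgesTouching (O.erase u) ∩ G.incidenceFinset u := by
    refine Finset.mem_inter.2 ⟨Finset.mem_filter.2 ⟨mem_edgeFinset.2 hadj, w, ?_, ?_⟩, ?_⟩
    · exact Finset.mem_erase.2 ⟨(G.ne_of_adj hadj).symm, hw⟩
    · exact Sym2.mem_mk_right u w
    · exact (G.mem_incidenceFinset u _).2 ⟨hadj, Sym2.mem_mk_left u w⟩
  have hunion :=
    Finset.card_union_add_card_inter (G.edgesTouching (O.erase u)) (G.incidenceFinset u)
  have hsub := Finset.card_le_card (G.edgesTouching_subset_erase_union O u)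
  have hinter := Finset.card_pos.2 ⟨_, hshared⟩
  rw [card_incidenceFinset_eq_degree] at hunion
  omega

lemma bridgeNetFlow_le_erase {O : Finset V} {u w : V} (hu : u ∈ O) (hw : w ∈ O)
    (hadj : G.Adj u w) : G.bridgeNetFlow O ≤ G.bridgeNetFlow (O.erase u) := by
  have hedges : ((G.edgesTouching O).card : ℤ) + 1 ≤
      (G.edgesTouching (O.erase u)).card + G.degree u := by
    exact_mod_cast G.card_edgesTouching_add_one_le hw hadj
  have hcard := Finset.card_erase_add_one hu
  have hsum := Finset.sum_erase_add O (fun v => (G.degree v : ℤ)) hu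
  rw [bridgeNetFlow_eq, bridgeNetFlow_eq, ← hsum, ← hcard]
  push_cast
  linarith

lemma exists_independent_bridgeNetFlow_le (O : Finset V) :
    ∃ S : Finset V, (∀ u ∈ S, ∀ w ∈ S, ¬ G.Adj u w) ∧
      G.bridgeNetFlow O ≤ G.bridgeNetFlow S := by
  induction O using Finset.strongInduction with
  | H O ih =>
    by_cases hindep : ∀ u ∈ O, ∀ w ∈ O, ¬ G.Adj u w
    · exact ⟨O, hindep, le_rfl⟩
    · push Not at hindep
      obtain ⟨u, hu, w, hw, hadj⟩ := hindep
      obtain ⟨S, hS, hle⟩ := ih (O.erase u) (Finset.erase_ssubset hu)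
      exact ⟨S, hS, (G.bridgeNetFlow_le_erase hu hw hadj).trans hle⟩

end SimpleGraph

/-- MIS-to-Bridges reduction, converse direction. With net flow of an open bridge set `O`
given by `TN − FN` (goods: one per edge touching `O`, plus isolated open vertices; bads:
`deg v − 1` per open vertex of positive degree): a single open bridge of positive degree
contributes at most 1, and any open set of net flow at least `k` yields an independent
set of size at least `k`. -/
theorem stmt_18 {V : Type} [Fintype V] [DecidableEq V] (G : SimpleGraph V)
    [DecidableRel G.Adj]
    (netflow : Finset V → ℤ)
    (hnet : ∀ O : Finset V, netflow O =
      (((G.edgeFinset.filter (fun e => ∃ v ∈ O, v ∈ e)).card : ℤ) +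
          ((O.filter (fun v => G.degree v = 0)).card : ℤ)) -
        (∑ v ∈ O.filter (fun v => 0 < G.degree v), ((G.degree v : ℤ) - 1))) :
    (∀ v : V, 0 < G.degree v → netflow {v} ≤ 1) ∧
    (∀ (O : Finset V) (k : ℕ), (k : ℤ) ≤ netflow O →
      ∃ S : Finset V, (∀ u ∈ S, ∀ w ∈ S, ¬ G.Adj u w) ∧ k ≤ S.card) := by
  have hnf : ∀ O, netflow O = G.bridgeNetFlow O := hnet
  refine ⟨fun v _ => ?_, fun O k hk => ?_⟩
  · simpa [hnf] using G.bridgeNetFlow_le_card {v}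
  · obtain ⟨S, hS, hOS⟩ := G.exists_independent_bridgeNetFlow_le O
    refine ⟨S, hS, ?_⟩
    have : (k : ℤ) ≤ S.card :=
      (hk.trans_eq (hnf O)).trans (hOS.trans (G.bridgeNetFlow_le_card S))
    exact_mod_cast this
end
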